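/- arXiv:2308.07835 — 3 statements merged into one kernel-verified Lean document; each statement's English description precedes it below -/
import Mathlib

section
/- Let Z be a real random variable satisfying P(|Z| < x) ≤ ρ·x for all x ≤ δ, with δ, ρ > 0, and let Z_ℓ be an approximation with E[|Z_ℓ - Z|^q] < ∞ for some q > 2. Let Z_ℓ^{(0)}, Z_ℓ^{(1)} be two copies of Z_ℓ (coupled with Z on the same probability space). Then for all 2 ≤ p ≤ q there exists b > 0, independent of ℓ, such that E[| max{(Z_ℓ^{(0)}+Z_ℓ^{(1)})/2, 0} - (max{Z_ℓ^{(0)},0}+max{Z_ℓ^{(1)},0})/2 |^p] ≤ b · E[|Z_ℓ - Z|^q]^{(p+1)/(q+1)}. -/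
/-!
Write `g a b = max ((a + b) / 2) 0 - (max a 0 + max b 0) / 2`. It vanishes unless `a` and `b`
have strictly opposite signs, and `|g a b| ≤ |a - b| / 4`. Hence, for any `z` and
`d = max |a - z| |b - z|`, we have `|g a b| ≤ d`, and `g a b ≠ 0` forces `|z| ≤ d` because `0` lies
between `a` and `b`. Distinguishing `d < ε` from `ε ≤ d` gives
`|g a b| ^ p ≤ ε ^ p 𝟙{|z| < ε} + ε ^ (p - q) d ^ q`. Taking `z = Z` and integrating, the small-ball
bound on `Z` and the moment bound give `ρ ε ^ (p + 1) + 2 ε ^ (p - q) E`, and the choice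
`ε ∝ E ^ (1 / (q + 1))` balances the two terms.
-/

open MeasureTheory Filter Topology

noncomputable def posPartMidpointGap (a b : ℝ) : ℝ :=
  max ((a + b) / 2) 0 - (max a 0 + max b 0) / 2

lemma max_zero_eq_add_abs_div_two (x : ℝ) : max x 0 = (x + |x|) / 2 := by
  rcases le_total 0 x with h | h
  · rw [max_eq_left h, abs_of_nonneg h]; ring
  · rw [max_eq_right h, abs_of_nonpos h]; ring

lemma posPartMidpointGap_eq (a b : ℝ) :
    posPartMidpointGap a b = (|a + b| - |a| - |b|) / 4 := by
  simp only [posPartMidpointGap, max_zero_eq_add_abs_div_two, abs_div, abs_two]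
  ring

lemma abs_posPartMidpointGap_le (a b : ℝ) : |posPartMidpointGap a b| ≤ |a - b| / 4 := by
  have ha : 2 * |a| ≤ |a + b| + |a - b| := by
    simpa [show (a + b) + (a - b) = 2 * a by ring, abs_mul] using abs_add_le (a + b) (a - b)
  have hb : 2 * |b| ≤ |a + b| + |a - b| := by
    simpa [show (a + b) - (a - b) = 2 * b by ring, abs_mul] using abs_sub (a + b) (a - b)
  rw [posPartMidpointGap_eq, abs_of_nonpos (by linarith [abs_add_le a b])]
  linarith

lemma mul_neg_of_posPartMidpointGap_ne_zero {a b : ℝ} (h : posPartMidpointGap a b ≠ 0) :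
    a * b < 0 := by
  rw [posPartMidpointGap_eq] at h
  have hab : ¬(|a + b| = |a| + |b|) := fun heq => h (by rw [heq]; ring)
  rw [abs_add_eq_add_abs_iff] at hab
  push Not at hab
  rcases lt_trichotomy a 0 with ha | rfl | ha
  · exact mul_neg_of_neg_of_pos ha (hab.2 ha.le)
  · exact absurd (hab.1 le_rfl) (hab.2 le_rfl).not_gt
  · exact mul_neg_of_pos_of_neg ha (hab.1 ha.le)

lemma abs_le_max_abs_sub_of_mul_neg {a b : ℝ} (h : a * b < 0) (z : ℝ) :
    |z| ≤ max |a - z| |b - z| := by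
  have ha := neg_abs_le (a - z)
  have ha' := le_abs_self (a - z)
  have hb := neg_abs_le (b - z)
  have hb' := le_abs_self (b - z)
  rw [le_max_iff]
  rcases mul_neg_iff.mp h with ⟨_, _⟩ | ⟨_, _⟩ <;> rcases abs_cases z with ⟨hz, _⟩ | ⟨hz, _⟩ <;>
    rw [hz] <;> first | exact Or.inl (by linarith) | exact Or.inr (by linarith)

lemma max_rpow_le_add {x y : ℝ} (hx : 0 ≤ x) (hy : 0 ≤ y) (q : ℝ) :
    max x y ^ q ≤ x ^ q + y ^ q := by
  rcases le_total x y with h | h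
  · rw [max_eq_right h]; linarith [Real.rpow_nonneg hx q]
  · rw [max_eq_left h]; linarith [Real.rpow_nonneg hy q]

lemma rpow_le_rpow_sub_mul_rpow {d ε p q : ℝ} (hε : 0 < ε) (hεd : ε ≤ d) (hpq : p ≤ q) :
    d ^ p ≤ ε ^ (p - q) * d ^ q := by
  have hd : 0 < d := hε.trans_le hεd
  calc d ^ p = d ^ (p - q) * d ^ q := by rw [← Real.rpow_add hd]; ring_nf
    _ ≤ ε ^ (p - q) * d ^ q :=
      mul_le_mul_of_nonneg_right (Real.rpow_le_rpow_of_nonpos hε hεd (by linarith))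
        (Real.rpow_nonneg hd.le q)

lemma abs_posPartMidpointGap_rpow_le {p q ε : ℝ} (hp : 0 < p) (hpq : p ≤ q) (hε : 0 < ε)
    (a b z : ℝ) :
    |posPartMidpointGap a b| ^ p ≤
      {x : ℝ | |x| < ε}.indicator (fun _ => ε ^ p) z +
        ε ^ (p - q) * (|a - z| ^ q + |b - z| ^ q) := by
  set d := max |a - z| |b - z|
  have hgap : |posPartMidpointGap a b| ≤ d := by
    have := abs_sub_le a z b
    rw [abs_sub_comm z b] at this
    linarith [abs_posPartMidpointGap_le a b, le_max_left |a - z| |b - z|,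
      le_max_right |a - z| |b - z|, abs_nonneg (a - z), abs_nonneg (b - z)]
  have hind : 0 ≤ {x : ℝ | |x| < ε}.indicator (fun _ => ε ^ p) z :=
    Set.indicator_nonneg (fun _ _ => by positivity) z
  have htail : 0 ≤ ε ^ (p - q) * (|a - z| ^ q + |b - z| ^ q) := by positivity
  rcases lt_or_ge d ε with hdε | hεd
  · by_cases h0 : posPartMidpointGap a b = 0
    · rw [h0, abs_zero, Real.zero_rpow hp.ne']
      positivity
    · have hz : |z| < ε :=
        (abs_le_max_abs_sub_of_mul_neg (mul_neg_of_posPartMidpointGap_ne_zero h0) z).trans_lt hdε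
      rw [Set.indicator_of_mem (show z ∈ {x : ℝ | |x| < ε} from hz)]
      have := Real.rpow_le_rpow (abs_nonneg _) (hgap.trans hdε.le) hp.le
      linarith
  · calc |posPartMidpointGap a b| ^ p ≤ d ^ p := Real.rpow_le_rpow (abs_nonneg _) hgap hp.le
      _ ≤ ε ^ (p - q) * d ^ q := rpow_le_rpow_sub_mul_rpow hε hεd hpq
      _ ≤ ε ^ (p - q) * (|a - z| ^ q + |b - z| ^ q) :=
        mul_le_mul_of_nonneg_left (max_rpow_le_add (abs_nonneg _) (abs_nonneg _) q)
          (Real.rpow_nonneg hε.le _)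
      _ ≤ _ := le_add_of_nonneg_left hind

theorem integral_abs_posPartMidpointGap_rpow_le {Ω : Type*} [MeasurableSpace Ω]
    {μ : Measure Ω} [IsFiniteMeasure μ] {X Y Z : Ω → ℝ} {p q ε : ℝ} (hp : 0 < p) (hpq : p ≤ q)
    (hε : 0 < ε) (hZ : Measurable Z) (hX : Integrable (fun ω => |X ω - Z ω| ^ q) μ)
    (hY : Integrable (fun ω => |Y ω - Z ω| ^ q) μ) :
    ∫ ω, |posPartMidpointGap (X ω) (Y ω)| ^ p ∂μ ≤
      μ.real {ω | |Z ω| < ε} * ε ^ p +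
        ε ^ (p - q) * (∫ ω, |X ω - Z ω| ^ q ∂μ + ∫ ω, |Y ω - Z ω| ^ q ∂μ) := by
  have hS : MeasurableSet {ω | |Z ω| < ε} := measurableSet_lt hZ.abs measurable_const
  have hind : Integrable ({ω | |Z ω| < ε}.indicator fun _ => ε ^ p) μ :=
    (integrable_const _).indicator hS
  have htail : Integrable (fun ω => ε ^ (p - q) * (|X ω - Z ω| ^ q + |Y ω - Z ω| ^ q)) μ :=
    (hX.add hY).const_mul _
  calc ∫ ω, |posPartMidpointGap (X ω) (Y ω)| ^ p ∂μ
      ≤ ∫ ω, ({ω | |Z ω| < ε}.indicator (fun _ => ε ^ p) ω +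
          ε ^ (p - q) * (|X ω - Z ω| ^ q + |Y ω - Z ω| ^ q)) ∂μ :=
        integral_mono_of_nonneg (ae_of_all _ fun ω => by positivity) (hind.add htail)
          (ae_of_all _ fun ω => abs_posPartMidpointGap_rpow_le hp hpq hε _ _ (Z ω))
    _ = _ := by
      rw [integral_add hind htail, integral_indicator_const _ hS, integral_const_mul,
        integral_add hX hY, smul_eq_mul]

theorem le_mul_rpow_of_forall_le_add {F E M a c δ r s : ℝ} (hr : 0 < r) (hs : 0 < s)
    (hδ : 0 < δ) (hE : 0 ≤ E) (hEM : E ≤ M) (hM : 0 < M)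
    (hF : ∀ ε, 0 < ε → ε ≤ δ → F ≤ a * ε ^ r + c * ε ^ (r - s) * E) :
    F ≤ (a * δ ^ r + c * δ ^ (r - s) * M) / M ^ (r / s) * E ^ (r / s) := by
  rcases hE.eq_or_lt with rfl | hEpos
  · rw [Real.zero_rpow (div_pos hr hs).ne', mul_zero]
    have hlim : Tendsto (fun ε : ℝ => a * ε ^ r) (𝓝[>] 0) (𝓝 0) := by
      have := ((Real.continuousAt_rpow_const 0 r (Or.inr hr.le)).tendsto).const_mul a
      simpa [Real.zero_rpow hr.ne'] using this.mono_left nhdsWithin_le_nhds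
    refine ge_of_tendsto hlim ?_
    filter_upwards [Ioc_mem_nhdsGT hδ] with ε ⟨hε, hεδ⟩
    simpa using hF ε hε hεδ
  · -- `ε = δ t` with `t ^ s = E / M` makes both terms of order `E ^ (r / s)`
    set t := (E / M) ^ (1 / s)
    have ht : 0 < t := by positivity
    have hts : t ^ s = E / M := by
      rw [← Real.rpow_mul (by positivity), one_div_mul_cancel hs.ne', Real.rpow_one]
    have htr : t ^ r = E ^ (r / s) / M ^ (r / s) := by
      rw [← Real.rpow_mul (by positivity), Real.div_rpow hE hM.le, one_div_mul_eq_div]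
    have ht1 : t ≤ 1 := Real.rpow_le_one (by positivity) ((div_le_one hM).mpr hEM) (by positivity)
    calc F ≤ a * (δ * t) ^ r + c * (δ * t) ^ (r - s) * E :=
          hF _ (by positivity) (mul_le_of_le_one_right hδ.le ht1)
      _ = (a * δ ^ r + c * δ ^ (r - s) * M) * t ^ r := by
          rw [Real.mul_rpow hδ.le ht.le, Real.mul_rpow hδ.le ht.le, Real.rpow_sub ht, hts]
          field_simp
      _ = _ := by rw [htr]; ring

theorem stmt7_general {Ω : Type*} [MeasurableSpace Ω] (μ : Measure Ω) [IsProbabilityMeasure μ]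
    (q p δ ρ K : ℝ) (hp2 : 2 ≤ p) (hpq : p ≤ q) (hδ : 0 < δ) (hρ : 0 < ρ)
    (Z : Ω → ℝ) (Zl : Fin 2 → ℕ → Ω → ℝ)
    (hZ : Measurable Z)
    (hcdf : ∀ x : ℝ, 0 < x → x ≤ δ → (μ {ω | |Z ω| < x}).toReal ≤ ρ * x)
    (E : ℕ → ℝ) (hE0 : ∀ ℓ, 0 ≤ E ℓ)
    (hint : ∀ i ℓ, Integrable (fun ω => |Zl i ℓ ω - Z ω| ^ q) μ)
    (hE : ∀ i ℓ, ∫ ω, |Zl i ℓ ω - Z ω| ^ q ∂μ ≤ E ℓ)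
    (hEK : ∀ ℓ, E ℓ ≤ K) :
    ∃ b > 0, ∀ ℓ : ℕ,
      ∫ ω, |max ((Zl 0 ℓ ω + Zl 1 ℓ ω) / 2) 0 -
          (max (Zl 0 ℓ ω) 0 + max (Zl 1 ℓ ω) 0) / 2| ^ p ∂μ ≤
        b * E ℓ ^ ((p + 1) / (q + 1)) := by
  have hp : 0 < p := by linarith
  set M := max K 1
  have hM : 0 < M := one_pos.trans_le (le_max_right K 1)
  refine ⟨(ρ * δ ^ (p + 1) + 2 * δ ^ ((p + 1) - (q + 1)) * M) / M ^ ((p + 1) / (q + 1)),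
    by positivity, fun ℓ => ?_⟩
  refine le_mul_rpow_of_forall_le_add (by linarith) (by linarith) hδ (hE0 ℓ)
    ((hEK ℓ).trans (le_max_left K 1)) hM fun ε hε hεδ => ?_
  calc ∫ ω, |posPartMidpointGap (Zl 0 ℓ ω) (Zl 1 ℓ ω)| ^ p ∂μ
      ≤ μ.real {ω | |Z ω| < ε} * ε ^ p +
          ε ^ (p - q) * (∫ ω, |Zl 0 ℓ ω - Z ω| ^ q ∂μ + ∫ ω, |Zl 1 ℓ ω - Z ω| ^ q ∂μ) :=
        integral_abs_posPartMidpointGap_rpow_le hp hpq hε hZ (hint 0 ℓ) (hint 1 ℓ)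
    _ ≤ ρ * ε * ε ^ p + ε ^ (p - q) * (E ℓ + E ℓ) := by
        gcongr
        exacts [hcdf ε hε hεδ, hE 0 ℓ, hE 1 ℓ]
    _ = ρ * ε ^ (p + 1) + 2 * ε ^ ((p + 1) - (q + 1)) * E ℓ := by
        rw [Real.rpow_add_one hε.ne', show p + 1 - (q + 1) = p - q by ring]
        ring

theorem stmt7 {Ω : Type*} [MeasurableSpace Ω] (μ : Measure Ω) [IsProbabilityMeasure μ]
    (q p δ ρ K : ℝ) (hq : 2 < q) (hp2 : 2 ≤ p) (hpq : p ≤ q) (hδ : 0 < δ) (hρ : 0 < ρ)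
    (Z : Ω → ℝ) (Zl : Fin 2 → ℕ → Ω → ℝ)
    (hZ : Measurable Z) (hZl : ∀ i ℓ, Measurable (Zl i ℓ))
    (hcdf : ∀ x : ℝ, 0 < x → x ≤ δ → (μ {ω | |Z ω| < x}).toReal ≤ ρ * x)
    (E : ℕ → ℝ) (hE0 : ∀ ℓ, 0 ≤ E ℓ)
    (hint : ∀ i ℓ, Integrable (fun ω => |Zl i ℓ ω - Z ω| ^ q) μ)
    (hE : ∀ i ℓ, ∫ ω, |Zl i ℓ ω - Z ω| ^ q ∂μ ≤ E ℓ)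
    (hEK : ∀ ℓ, E ℓ ≤ K) :
    ∃ b > 0, ∀ ℓ : ℕ,
      ∫ ω, |max ((Zl 0 ℓ ω + Zl 1 ℓ ω) / 2) 0 -
          (max (Zl 0 ℓ ω) 0 + max (Zl 1 ℓ ω) 0) / 2| ^ p ∂μ ≤
        b * E ℓ ^ ((p + 1) / (q + 1)) :=
  stmt7_general μ q p δ ρ K hp2 hpq hδ hρ Z Zl hZ hcdf E hE0 hint hE hEK
end

section
/- Let Z, Z0, Z1 be random variables and P(|Z| < x) ≤ ρx for all 0 < x ≤ δ. Then for any p ≥ 1, q > p, L > 0, and 0 < ψ ≤ δ: E[|Z0 - Z1|^p · 1{|Z| < |Z0 - Z1|}] ≤ ρ ψ^{p+1} + ψ^{p-q} E[|Z0 - Z1|^q]. -/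
/-!
On `{|Z| < |Z0 - Z1| < ψ}` the integrand is at most `ψ ^ p`, and this event lies in `{|Z| < ψ}`,
whose probability is at most `ρ ψ`. On `{|Z0 - Z1| ≥ ψ}` the Markov-type bound
`x ^ p ≤ ψ ^ (p - q) x ^ q` for `x ≥ ψ` and `p ≤ q` trades the exponent `p` for `q`.
-/

open MeasureTheory

namespace Real

theorem rpow_le_rpow_sub_mul_rpow {x ψ p q : ℝ} (hψ : 0 < ψ) (hψx : ψ ≤ x) (hpq : p ≤ q) :
    x ^ p ≤ ψ ^ (p - q) * x ^ q := by
  have hx : 0 < x := hψ.trans_le hψx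
  calc x ^ p = x ^ (p - q) * x ^ q := by rw [← rpow_add hx, sub_add_cancel]
    _ ≤ ψ ^ (p - q) * x ^ q :=
      mul_le_mul_of_nonneg_right (rpow_le_rpow_of_nonpos hψ hψx (by linarith)) (rpow_nonneg hx.le q)

theorem rpow_le_one_add_rpow {x p q : ℝ} (hx : 0 ≤ x) (hp : 0 ≤ p) (hpq : p ≤ q) :
    x ^ p ≤ 1 + x ^ q := by
  rcases le_total x 1 with hx1 | hx1
  · linarith [rpow_le_one hx hx1 hp, rpow_nonneg hx q]
  · linarith [rpow_le_rpow_of_exponent_le hx1 hpq]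

end Real

section SetIntegral

variable {Ω : Type*} [MeasurableSpace Ω] {μ : Measure Ω} [IsFiniteMeasure μ] {f : Ω → ℝ}
  {p q : ℝ}

theorem integrable_rpow_of_le (hf : Measurable f) (hf0 : ∀ ω, 0 ≤ f ω) (hp : 0 ≤ p)
    (hpq : p ≤ q) (hint : Integrable (fun ω => f ω ^ q) μ) :
    Integrable (fun ω => f ω ^ p) μ := by
  refine ((integrable_const 1).add hint).mono' (hf.pow_const p).aestronglyMeasurable ?_
  filter_upwards with ω
  rw [Real.norm_of_nonneg (Real.rpow_nonneg (hf0 ω) p)]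
  exact Real.rpow_le_one_add_rpow (hf0 ω) hp hpq

theorem setIntegral_rpow_le {A : Set Ω} {ψ : ℝ} (hf : Measurable f) (hf0 : ∀ ω, 0 ≤ f ω)
    (hA : MeasurableSet A) (hp : 0 ≤ p) (hpq : p ≤ q) (hψ : 0 < ψ)
    (hint : Integrable (fun ω => f ω ^ q) μ) :
    ∫ ω in A, f ω ^ p ∂μ ≤
      μ.real (A ∩ {ω | f ω < ψ}) * ψ ^ p + ψ ^ (p - q) * ∫ ω, f ω ^ q ∂μ := by
  have hB : MeasurableSet {ω | f ω < ψ} := measurableSet_lt hf measurable_const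
  have hintp := integrable_rpow_of_le hf hf0 hp hpq hint
  have hsmall : ∫ ω in A ∩ {ω | f ω < ψ}, f ω ^ p ∂μ ≤ μ.real (A ∩ {ω | f ω < ψ}) * ψ ^ p := by
    rw [← smul_eq_mul, ← setIntegral_const]
    refine setIntegral_mono_on hintp.integrableOn integrableOn_const (hA.inter hB) ?_
    exact fun ω hω => Real.rpow_le_rpow (hf0 ω) hω.2.le hp
  have hlarge : ∫ ω in A \ {ω | f ω < ψ}, f ω ^ p ∂μ ≤ ψ ^ (p - q) * ∫ ω, f ω ^ q ∂μ := by
    rw [← integral_const_mul]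
    calc ∫ ω in A \ {ω | f ω < ψ}, f ω ^ p ∂μ
        ≤ ∫ ω in A \ {ω | f ω < ψ}, ψ ^ (p - q) * f ω ^ q ∂μ :=
          setIntegral_mono_on hintp.integrableOn (hint.const_mul _).integrableOn (hA.diff hB)
            fun ω hω => Real.rpow_le_rpow_sub_mul_rpow hψ (not_lt.1 hω.2) hpq
      _ ≤ ∫ ω, ψ ^ (p - q) * f ω ^ q ∂μ :=
          setIntegral_le_integral (hint.const_mul _) <| Filter.Eventually.of_forall fun ω =>
            mul_nonneg (Real.rpow_nonneg hψ.le _) (Real.rpow_nonneg (hf0 ω) _)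
  rw [← integral_inter_add_sdiff hB hintp.integrableOn]
  exact add_le_add hsmall hlarge

end SetIntegral

theorem stmt10_general {Ω : Type*} [MeasurableSpace Ω] (μ : Measure Ω) [IsProbabilityMeasure μ]
    (Z Z0 Z1 : Ω → ℝ) (hZ : Measurable Z) (hZ0 : Measurable Z0) (hZ1 : Measurable Z1)
    (p q ρ δ ψ : ℝ) (hp : 1 ≤ p) (hq : p < q)
    (hψ0 : 0 < ψ) (hψδ : ψ ≤ δ)
    (hcdf : ∀ x : ℝ, 0 < x → x ≤ δ → (μ {ω | |Z ω| < x}).toReal ≤ ρ * x)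
    (hint : Integrable (fun ω => |Z0 ω - Z1 ω| ^ q) μ) :
    ∫ ω in {ω | |Z ω| < |Z0 ω - Z1 ω|}, |Z0 ω - Z1 ω| ^ p ∂μ ≤
      ρ * ψ ^ (p + 1) + ψ ^ (p - q) * ∫ ω, |Z0 ω - Z1 ω| ^ q ∂μ := by
  have hf : Measurable fun ω => |Z0 ω - Z1 ω| := (hZ0.sub hZ1).abs
  have hsmall : μ.real ({ω | |Z ω| < |Z0 ω - Z1 ω|} ∩ {ω | |Z0 ω - Z1 ω| < ψ}) ≤ ρ * ψ :=
    (measureReal_mono fun ω hω => show |Z ω| < ψ from hω.1.trans hω.2).trans (hcdf ψ hψ0 hψδ)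
  calc ∫ ω in {ω | |Z ω| < |Z0 ω - Z1 ω|}, |Z0 ω - Z1 ω| ^ p ∂μ
      ≤ μ.real ({ω | |Z ω| < |Z0 ω - Z1 ω|} ∩ {ω | |Z0 ω - Z1 ω| < ψ}) * ψ ^ p
          + ψ ^ (p - q) * ∫ ω, |Z0 ω - Z1 ω| ^ q ∂μ :=
        setIntegral_rpow_le hf (fun _ => abs_nonneg _) (measurableSet_lt hZ.abs hf)
          (by linarith) hq.le hψ0 hint
    _ ≤ ρ * ψ * ψ ^ p + ψ ^ (p - q) * ∫ ω, |Z0 ω - Z1 ω| ^ q ∂μ := by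
        gcongr
    _ = ρ * ψ ^ (p + 1) + ψ ^ (p - q) * ∫ ω, |Z0 ω - Z1 ω| ^ q ∂μ := by
        rw [Real.rpow_add hψ0, Real.rpow_one]
        ring

theorem stmt10 {Ω : Type*} [MeasurableSpace Ω] (μ : Measure Ω) [IsProbabilityMeasure μ]
    (Z Z0 Z1 : Ω → ℝ) (hZ : Measurable Z) (hZ0 : Measurable Z0) (hZ1 : Measurable Z1)
    (p q ρ δ ψ : ℝ) (hp : 1 ≤ p) (hq : p < q) (hρ : 0 < ρ) (hδ : 0 < δ)
    (hψ0 : 0 < ψ) (hψδ : ψ ≤ δ)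
    (hcdf : ∀ x : ℝ, 0 < x → x ≤ δ → (μ {ω | |Z ω| < x}).toReal ≤ ρ * x)
    (hint : Integrable (fun ω => |Z0 ω - Z1 ω| ^ q) μ) :
    ∫ ω in {ω | |Z ω| < |Z0 ω - Z1 ω|}, |Z0 ω - Z1 ω| ^ p ∂μ ≤
      ρ * ψ ^ (p + 1) + ψ ^ (p - q) * ∫ ω, |Z0 ω - Z1 ω| ^ q ∂μ :=
  stmt10_general μ Z Z0 Z1 hZ hZ0 hZ1 p q ρ δ ψ hp hq hψ0 hψδ hcdf hint
end

section
/- Suppose E[|D_k|^p] ≤ a·k^λ·2^{-βpk/2} for all k ≥ 0 for constants a > 0, λ ≥ 0, β ≥ 1, p ≥ 2, and let M_k = max{M_0·2^{ℓ-ζk}, 1} with 1 ≤ ζ ≤ β. Then Σ_{k=0}^{ℓ} M_k^{-1} E[|D_k|^p]^{2/p} ≤ C·ℓ^{2λ/p}·2^{-ℓ}·(1 if ζ < β, else (ℓ+1)) for a constant C independent of ℓ. -/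
/-! With `M_k ≥ M_0 2^{ℓ-ζk}` and `E[|D_k|^p]^{2/p} ≤ a^{2/p} k^{2λ/p} 2^{-βk}`, the `k`-th term is at
most `M_0⁻¹ a^{2/p} ℓ^{2λ/p} 2^{-ℓ} r^k` with `r = 2^{ζ-β} ≤ 1`. The geometric sum `∑_{k ≤ ℓ} r^k`
is bounded by `(1 - r)⁻¹` when `ζ < β` and equals `ℓ + 1` when `ζ = β`. -/

open Finset

lemma rpow_two_div_of_moment_bound {a x : ℝ} (lam β p : ℝ) (ha : 0 ≤ a) (hx : 0 ≤ x) (hp : 0 < p) :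
    (a * x ^ lam * 2 ^ (-(β * p * x) / 2)) ^ (2 / p) =
      a ^ (2 / p) * x ^ (2 * lam / p) * 2 ^ (-(β * x)) := by
  rw [Real.mul_rpow (by positivity) (by positivity), Real.mul_rpow ha (by positivity),
    ← Real.rpow_mul hx, ← Real.rpow_mul zero_le_two]
  congr 3 <;> field_simp

lemma inv_max_mul_two_rpow_le {M0 : ℕ} (hM0 : 0 < M0) (ℓ ζ : ℝ) (k : ℕ) :
    (max ((M0 : ℝ) * 2 ^ (ℓ - ζ * k)) 1)⁻¹ ≤ (M0 : ℝ)⁻¹ * 2 ^ (-ℓ) * 2 ^ (ζ * k) := by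
  calc (max ((M0 : ℝ) * 2 ^ (ℓ - ζ * k)) 1)⁻¹
      ≤ ((M0 : ℝ) * 2 ^ (ℓ - ζ * k))⁻¹ := inv_anti₀ (by positivity) (le_max_left _ _)
    _ = (M0 : ℝ)⁻¹ * 2 ^ (-ℓ) * 2 ^ (ζ * k) := by
      rw [mul_inv, ← Real.rpow_neg zero_le_two, mul_assoc, ← Real.rpow_add two_pos]
      ring_nf

lemma two_rpow_mul_two_rpow_neg (ζ β : ℝ) (k : ℕ) :
    (2 : ℝ) ^ (ζ * k) * 2 ^ (-(β * k)) = ((2 : ℝ) ^ (ζ - β)) ^ k := by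
  rw [← Real.rpow_add two_pos, ← Real.rpow_natCast, ← Real.rpow_mul zero_le_two]
  ring_nf

lemma inv_max_mul_rpow_le_geom {e : ℕ → ℝ} {a lam β ζ p : ℝ} {M0 : ℕ}
    (ha : 0 ≤ a) (hlam : 0 ≤ lam) (hp : 0 < p) (hM0 : 0 < M0) (he0 : ∀ k, 0 ≤ e k)
    (he : ∀ k : ℕ, e k ≤ a * (k : ℝ) ^ lam * 2 ^ (-(β * p * (k : ℝ)) / 2))
    {ℓ k : ℕ} (hkℓ : k ≤ ℓ) :
    (max ((M0 : ℝ) * 2 ^ ((ℓ : ℝ) - ζ * (k : ℝ))) 1)⁻¹ * e k ^ (2 / p) ≤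
      (M0 : ℝ)⁻¹ * a ^ (2 / p) * (ℓ : ℝ) ^ (2 * lam / p) * 2 ^ (-(ℓ : ℝ)) *
        ((2 : ℝ) ^ (ζ - β)) ^ k := by
  have he_rpow : e k ^ (2 / p) ≤ a ^ (2 / p) * (ℓ : ℝ) ^ (2 * lam / p) * 2 ^ (-(β * k)) :=
    calc e k ^ (2 / p) ≤ (a * (k : ℝ) ^ lam * 2 ^ (-(β * p * (k : ℝ)) / 2)) ^ (2 / p) :=
          Real.rpow_le_rpow (he0 k) (he k) (by positivity)
      _ = a ^ (2 / p) * (k : ℝ) ^ (2 * lam / p) * 2 ^ (-(β * k)) :=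
          rpow_two_div_of_moment_bound lam β p ha k.cast_nonneg hp
      _ ≤ a ^ (2 / p) * (ℓ : ℝ) ^ (2 * lam / p) * 2 ^ (-(β * k)) := by
          gcongr
  calc (max ((M0 : ℝ) * 2 ^ ((ℓ : ℝ) - ζ * (k : ℝ))) 1)⁻¹ * e k ^ (2 / p)
      ≤ ((M0 : ℝ)⁻¹ * 2 ^ (-(ℓ : ℝ)) * 2 ^ (ζ * k)) *
          (a ^ (2 / p) * (ℓ : ℝ) ^ (2 * lam / p) * 2 ^ (-(β * k))) :=
        mul_le_mul (inv_max_mul_two_rpow_le hM0 ℓ ζ k) he_rpow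
          (Real.rpow_nonneg (he0 k) _) (by positivity)
    _ = (M0 : ℝ)⁻¹ * a ^ (2 / p) * (ℓ : ℝ) ^ (2 * lam / p) * 2 ^ (-(ℓ : ℝ)) *
          ((2 : ℝ) ^ (ζ * k) * 2 ^ (-(β * k))) := by ring
    _ = _ := by rw [two_rpow_mul_two_rpow_neg]

lemma sum_inv_max_mul_rpow_le {e : ℕ → ℝ} {a lam β ζ p : ℝ} {M0 : ℕ}
    (ha : 0 ≤ a) (hlam : 0 ≤ lam) (hp : 0 < p) (hM0 : 0 < M0) (he0 : ∀ k, 0 ≤ e k)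
    (he : ∀ k : ℕ, e k ≤ a * (k : ℝ) ^ lam * 2 ^ (-(β * p * (k : ℝ)) / 2)) (ℓ : ℕ) :
    ∑ k ∈ range (ℓ + 1), (max ((M0 : ℝ) * 2 ^ ((ℓ : ℝ) - ζ * (k : ℝ))) 1)⁻¹ * e k ^ (2 / p) ≤
      (M0 : ℝ)⁻¹ * a ^ (2 / p) * (ℓ : ℝ) ^ (2 * lam / p) * 2 ^ (-(ℓ : ℝ)) *
        ∑ k ∈ range (ℓ + 1), ((2 : ℝ) ^ (ζ - β)) ^ k := by
  rw [Finset.mul_sum]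
  exact sum_le_sum fun k hk ↦ inv_max_mul_rpow_le_geom ha hlam hp hM0 he0 he
    (Nat.lt_succ_iff.mp (mem_range.mp hk))

lemma geom_sum_le_inv_one_sub {r : ℝ} (hr0 : 0 ≤ r) (hr1 : r < 1) (n : ℕ) :
    ∑ k ∈ range n, r ^ k ≤ (1 - r)⁻¹ := by
  have := geom_sum_Ico_le_of_lt_one (m := 0) (n := n) hr0 hr1
  rwa [← range_eq_Ico, pow_zero, one_div] at this

theorem stmt11_general (e : ℕ → ℝ) (a lam β ζ p : ℝ) (M0 : ℕ)
    (ha : 0 < a) (hlam : 0 ≤ lam) (hp : 2 ≤ p)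
    (hζβ : ζ ≤ β) (hM0 : 0 < M0)
    (he0 : ∀ k, 0 ≤ e k)
    (he : ∀ k : ℕ, e k ≤ a * (k : ℝ) ^ lam * 2 ^ (-(β * p * (k : ℝ)) / 2)) :
    ∃ C > 0, ∀ ℓ : ℕ, 1 ≤ ℓ →
      ∑ k ∈ Finset.range (ℓ + 1),
          (max ((M0 : ℝ) * 2 ^ ((ℓ : ℝ) - ζ * (k : ℝ))) 1)⁻¹ * e k ^ (2 / p) ≤
        C * (ℓ : ℝ) ^ (2 * lam / p) * 2 ^ (-(ℓ : ℝ)) *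
          (if ζ < β then 1 else (ℓ : ℝ) + 1) := by
  have hbound := sum_inv_max_mul_rpow_le (ζ := ζ) ha.le hlam (by linarith) hM0 he0 he
  have hK : 0 < (M0 : ℝ)⁻¹ * a ^ (2 / p) := by positivity
  by_cases hlt : ζ < β
  · have hr1 : (2 : ℝ) ^ (ζ - β) < 1 :=
      Real.rpow_lt_one_of_one_lt_of_neg one_lt_two (by linarith)
    refine ⟨(M0 : ℝ)⁻¹ * a ^ (2 / p) * (1 - 2 ^ (ζ - β))⁻¹,
      mul_pos hK (inv_pos.mpr (by linarith)), fun ℓ _ ↦ ?_⟩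
    rw [if_pos hlt, mul_one]
    refine (hbound ℓ).trans ?_
    have := geom_sum_le_inv_one_sub (by positivity) hr1 (ℓ + 1)
    calc _ ≤ (M0 : ℝ)⁻¹ * a ^ (2 / p) * (ℓ : ℝ) ^ (2 * lam / p) * 2 ^ (-(ℓ : ℝ)) *
          (1 - 2 ^ (ζ - β))⁻¹ := by gcongr
      _ = _ := by ring
  · have hr : (2 : ℝ) ^ (ζ - β) = 1 := by
      rw [le_antisymm hζβ (not_lt.mp hlt), sub_self, Real.rpow_zero]
    refine ⟨(M0 : ℝ)⁻¹ * a ^ (2 / p), hK, fun ℓ _ ↦ ?_⟩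
    simpa [if_neg hlt, hr] using hbound ℓ

theorem stmt11 (e : ℕ → ℝ) (a lam β ζ p : ℝ) (M0 : ℕ)
    (ha : 0 < a) (hlam : 0 ≤ lam) (hβ : 1 ≤ β) (hp : 2 ≤ p)
    (hζ1 : 1 ≤ ζ) (hζβ : ζ ≤ β) (hM0 : 0 < M0)
    (he0 : ∀ k, 0 ≤ e k)
    (he : ∀ k : ℕ, e k ≤ a * (k : ℝ) ^ lam * 2 ^ (-(β * p * (k : ℝ)) / 2)) :
    ∃ C > 0, ∀ ℓ : ℕ, 1 ≤ ℓ →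
      ∑ k ∈ Finset.range (ℓ + 1),
          (max ((M0 : ℝ) * 2 ^ ((ℓ : ℝ) - ζ * (k : ℝ))) 1)⁻¹ * e k ^ (2 / p) ≤
        C * (ℓ : ℝ) ^ (2 * lam / p) * 2 ^ (-(ℓ : ℝ)) *
          (if ζ < β then 1 else (ℓ : ℝ) + 1) :=
  stmt11_general e a lam β ζ p M0 ha hlam hp hζβ hM0 he0 he
end
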